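/- Let (A, G, α) be a von Neumann dynamical system. Then π_A^α has a nonzero G-invariant vector if and only if there is a normal G-invariant state on A. -/

import Mathlib

open scoped ComplexOrder

/-- A standard form of a von Neumann algebra `M ⊆ B(H)`. -/
structure StandardForm {H : Type*} [NormedAddCommGroup H] [InnerProductSpace ℂ H]
    [CompleteSpace H] (M : VonNeumannAlgebra H) where
  J : H ≃ₗᵢ⋆[ℂ] H
  P : Set H
  J_involutive : ∀ ξ : H, J (J ξ) = ξ
  selfDual : ∀ ξ : H, ξ ∈ P ↔ ∀ η ∈ P, 0 ≤ (inner ℂ ξ η : ℂ)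
  J_fix : ∀ ξ ∈ P, J ξ = ξ
  JMJ_commutant : ∀ x ∈ M, ∃ y ∈ M.commutant, ∀ ξ : H, J (x (J ξ)) = y ξ
  commutant_JMJ : ∀ y ∈ M.commutant, ∃ x ∈ M, ∀ ξ : H, J (x (J ξ)) = y ξ
  cone_stable : ∀ x ∈ M, ∀ ξ ∈ P, x (J (x (J ξ))) ∈ P

/-!
An invariant vector `ξ ≠ 0` pairs nontrivially with some `w ∈ P` (self-duality), so after a
phase rotation the nearest point of the closed convex cone `P` to `ξ` is nonzero; it is invariant
because each `π(s)` is an isometry fixing `ξ` and preserving `P`, and its normalisation gives an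
invariant vector state. Conversely, if `ω_ξ` is invariant, then `π(s)⁻¹ ξ` and `ξ` are vectors of
`P` with the same vector state, hence equal. For this uniqueness write `ξ - η = v - m` with
`v, m ∈ P` orthogonal (Moreau decomposition). The cone condition `x J x J P ⊆ P` makes `A v` and
`A' v` orthogonal to `m`, so the projection `p ∈ A` onto `[A' v]` fixes `v` and kills `m`, and
`ω_ξ(p) = ω_η(p)` forces `v = 0`; thus `η - ξ ∈ P`, and symmetrically `ξ - η ∈ P`.
-/

open scoped InnerProductSpace

section NearestPoint

open Set

variable {F : Type*} [NormedAddCommGroup F] [InnerProductSpace ℝ F] {K : Set F}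

theorem Convex.eq_of_norm_eq_iInf (hK : Convex ℝ K) {u v₁ v₂ : F} (hv₁ : v₁ ∈ K) (hv₂ : v₂ ∈ K)
    (h₁ : ‖u - v₁‖ = ⨅ w : K, ‖u - w‖) (h₂ : ‖u - v₂‖ = ⨅ w : K, ‖u - w‖) : v₁ = v₂ := by
  rw [norm_eq_iInf_iff_real_inner_le_zero hK hv₁] at h₁
  rw [norm_eq_iInf_iff_real_inner_le_zero hK hv₂] at h₂
  have hsum : ⟪u - v₁, v₂ - v₁⟫_ℝ + ⟪u - v₂, v₁ - v₂⟫_ℝ = ⟪v₂ - v₁, v₂ - v₁⟫_ℝ := by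
    rw [← neg_sub v₂ v₁, inner_neg_right, ← sub_eq_add_neg, ← inner_sub_left,
      sub_sub_sub_cancel_left]
  have hnonpos : ⟪v₂ - v₁, v₂ - v₁⟫_ℝ ≤ 0 := hsum ▸ add_nonpos (h₁ v₂ hv₂) (h₂ v₁ hv₁)
  exact (sub_eq_zero.1 (real_inner_self_nonpos.1 hnonpos)).symm

theorem Convex.apply_eq_of_norm_eq_iInf (hK : Convex ℝ K) {T : F → F} (hT : Isometry T)
    (hTK : MapsTo T K K) {u v : F} (hTu : T u = u) (hv : v ∈ K)
    (hmin : ‖u - v‖ = ⨅ w : K, ‖u - w‖) : T v = v :=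
  hK.eq_of_norm_eq_iInf (hTK hv) hv
    (by rw [← hmin, ← dist_eq_norm, ← dist_eq_norm, ← hT.dist_eq u v, hTu]) hmin

theorem Convex.exists_mem_ne_zero_forall_apply_eq (hK : Convex ℝ K) (hKc : IsComplete K)
    {u w : F} (hw : w ∈ K) (huw : 0 < ⟪u, w⟫_ℝ) {ι : Type*} (T : ι → F → F)
    (hT : ∀ i, Isometry (T i)) (hTK : ∀ i, MapsTo (T i) K K) (hTu : ∀ i, T i u = u) :
    ∃ v ∈ K, v ≠ 0 ∧ ∀ i, T i v = v := by
  obtain ⟨v, hv, hmin⟩ := exists_norm_eq_iInf_of_complete_convex ⟨w, hw⟩ hKc hK u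
  refine ⟨v, hv, ?_, fun i => hK.apply_eq_of_norm_eq_iInf (hT i) (hTK i) (hTu i) hv hmin⟩
  rintro rfl
  have := (norm_eq_iInf_iff_real_inner_le_zero hK hv).1 hmin w hw
  rw [sub_zero, sub_zero] at this
  linarith

theorem Convex.exists_moreau_decomposition (hK : Convex ℝ K) (hKc : IsComplete K)
    (hKsmul : ∀ w ∈ K, ∀ r : ℝ, 0 ≤ r → r • w ∈ K) (hne : K.Nonempty) (u : F) :
    ∃ v ∈ K, ⟪u - v, v⟫_ℝ = 0 ∧ ∀ w ∈ K, ⟪u - v, w⟫_ℝ ≤ 0 := by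
  obtain ⟨v, hv, hmin⟩ := exists_norm_eq_iInf_of_complete_convex hne hKc hK u
  have hvar := (norm_eq_iInf_iff_real_inner_le_zero hK hv).1 hmin
  have hle : ⟪u - v, v⟫_ℝ ≤ 0 := by
    simpa [two_smul] using hvar _ (hKsmul v hv 2 zero_le_two)
  have hge : 0 ≤ ⟪u - v, v⟫_ℝ := by
    have h0 := hvar 0 (by simpa using hKsmul v hv 0 le_rfl)
    rwa [zero_sub, inner_neg_right, neg_nonpos] at h0
  refine ⟨v, hv, le_antisymm hle hge, fun w hw => ?_⟩
  have := hvar w hw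
  rw [inner_sub_right] at this
  linarith

end NearestPoint

namespace VonNeumannAlgebra

variable {H : Type*} [NormedAddCommGroup H] [InnerProductSpace ℂ H] [CompleteSpace H]

theorem exists_isStarProjection_mem_apply_eq {M : VonNeumannAlgebra H} {ξ η : H}
    (h : ∀ y ∈ M.commutant, ⟪y ξ, η⟫_ℂ = 0) :
    ∃ p ∈ M, IsStarProjection p ∧ p ξ = ξ ∧ p η = 0 := by
  set K0 : Submodule ℂ H :=
    (Subalgebra.toSubmodule M.commutant.toSubalgebra).map
      (ContinuousLinearMap.apply ℂ H ξ : (H →L[ℂ] H) →ₗ[ℂ] H)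
  set K := K0.topologicalClosure
  refine ⟨K.starProjection, ?_, isStarProjection_starProjection, ?_, ?_⟩
  · rw [IsStarProjection.mem_iff isStarProjection_starProjection M]
    intro y hy
    rw [Submodule.range_starProjection]
    apply Submodule.topologicalClosure_mem_invtSubmodule
    rw [Module.End.mem_invtSubmodule_iff_forall_mem_of_mem]
    rintro _ ⟨y', hy', rfl⟩
    exact ⟨y * y', M.commutant.mul_mem hy hy', rfl⟩
  · rw [Submodule.starProjection_eq_self_iff]
    exact K0.le_topologicalClosure ⟨1, M.commutant.one_mem, rfl⟩
  · rw [Submodule.starProjection_apply_eq_zero_iff, Submodule.orthogonal_closure]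
    rintro _ ⟨y, hy, rfl⟩
    exact h y hy

end VonNeumannAlgebra

namespace StandardForm

open ContinuousLinearMap

variable {H : Type*} [NormedAddCommGroup H] [InnerProductSpace ℂ H] [CompleteSpace H]
  {A : VonNeumannAlgebra H} (sf : StandardForm A)

theorem inner_J_J (u v : H) : ⟪sf.J u, sf.J v⟫_ℂ = ⟪v, u⟫_ℂ := by
  have hJadd (x y : H) : sf.J x + Complex.I • sf.J y = sf.J (x - Complex.I • y) := by
    simp [sf.J.map_smulₛₗ, sub_eq_add_neg]
  have hJsub (x y : H) : sf.J x - Complex.I • sf.J y = sf.J (x + Complex.I • y) := by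
    simp [sf.J.map_smulₛₗ, sub_eq_add_neg]
  have hsub : v - Complex.I • u = (-Complex.I) • (u + Complex.I • v) := by
    rw [smul_add, smul_smul]; simp [sub_eq_add_neg, add_comm]
  have hadd : v + Complex.I • u = Complex.I • (u - Complex.I • v) := by
    rw [smul_sub, smul_smul]; simp [add_comm]
  rw [inner_eq_sum_norm_sq_div_four (sf.J u), inner_eq_sum_norm_sq_div_four v]
  simp only [RCLike.I_to_complex, hJadd, hJsub, ← map_add, ← map_sub,
    LinearIsometryEquiv.norm_map, hsub, hadd, norm_smul, norm_neg, Complex.norm_I, one_mul,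
    add_comm v u, norm_sub_rev v u]

theorem im_inner_eq_zero_of_J_eq {u v : H} (hu : sf.J u = u) (hv : sf.J v = v) :
    (⟪u, v⟫_ℂ).im = 0 := by
  have h := sf.inner_J_J v u
  rw [hu, hv] at h
  exact Complex.conj_eq_iff_im.1 (by rw [inner_conj_symm, h])

theorem inner_nonneg {u v : H} (hu : u ∈ sf.P) (hv : v ∈ sf.P) : 0 ≤ ⟪u, v⟫_ℂ :=
  (sf.selfDual u).1 hu v hv

theorem zero_mem : (0 : H) ∈ sf.P :=
  (sf.selfDual 0).2 fun η _ => by simp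

theorem add_mem {u v : H} (hu : u ∈ sf.P) (hv : v ∈ sf.P) : u + v ∈ sf.P :=
  (sf.selfDual _).2 fun η hη => by
    rw [inner_add_left]; exact add_nonneg (sf.inner_nonneg hu hη) (sf.inner_nonneg hv hη)

theorem smul_mem {u : H} (hu : u ∈ sf.P) {r : ℝ} (hr : 0 ≤ r) : r • u ∈ sf.P :=
  (sf.selfDual _).2 fun η hη => by
    rw [← Complex.coe_smul, inner_smul_left, Complex.conj_ofReal]
    exact mul_nonneg (Complex.zero_le_real.2 hr) (sf.inner_nonneg hu hη)

theorem convex : Convex ℝ sf.P :=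
  fun _ hx _ hy _ _ ha hb _ => sf.add_mem (sf.smul_mem hx ha) (sf.smul_mem hy hb)

theorem isClosed : IsClosed sf.P := by
  have hP : sf.P = ⋂ η ∈ sf.P, {ξ : H | 0 ≤ ⟪ξ, η⟫_ℂ} := by
    ext ξ
    simpa using sf.selfDual ξ
  rw [hP]
  exact isClosed_biInter fun η _ =>
    isClosed_Ici.preimage (f := fun ξ : H => ⟪ξ, η⟫_ℂ) (by fun_prop)

theorem eq_zero_of_mem_of_neg_mem {ξ : H} (h : ξ ∈ sf.P) (h' : -ξ ∈ sf.P) : ξ = 0 := by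
  have hle := sf.inner_nonneg h h'
  rw [inner_neg_right, neg_nonneg] at hle
  exact inner_self_eq_zero.1 (le_antisymm hle (sf.inner_nonneg h h))

theorem mem_of_re_inner_nonneg {ξ : H} (hξ : sf.J ξ = ξ) (h : ∀ w ∈ sf.P, 0 ≤ (⟪ξ, w⟫_ℂ).re) :
    ξ ∈ sf.P :=
  (sf.selfDual ξ).2 fun w hw =>
    Complex.le_def.2 ⟨h w hw, (sf.im_inner_eq_zero_of_J_eq hξ (sf.J_fix w hw)).symm⟩

theorem exists_inner_ne_zero {ξ : H} (hξ : ξ ≠ 0) : ∃ w ∈ sf.P, ⟪ξ, w⟫_ℂ ≠ 0 := by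
  by_contra! h
  have hP : ξ ∈ sf.P := (sf.selfDual ξ).2 fun w hw => (h w hw).ge
  exact hξ (inner_self_eq_zero.1 (h ξ hP))

theorem apply_J_apply_mem {x : H →L[ℂ] H} (hx : x ∈ A) {ξ : H} (hξ : ξ ∈ sf.P) :
    x (sf.J (x ξ)) ∈ sf.P := by
  simpa [sf.J_fix ξ hξ] using sf.cone_stable x hx ξ hξ

theorem re_inner_apply_eq_zero {ξ η : H} (hξ : ξ ∈ sf.P) (hη : η ∈ sf.P) (h0 : ⟪ξ, η⟫_ℂ = 0)
    {x : H →L[ℂ] H} (hx : x ∈ A) : (⟪x ξ, η⟫_ℂ).re = 0 := by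
  set w := ⟪x ξ, η⟫_ℂ
  set c := ⟪x (sf.J (x ξ)), η⟫_ℂ
  have hJw : ⟪sf.J (x ξ), η⟫_ℂ = starRingEnd ℂ w := by
    calc ⟪sf.J (x ξ), η⟫_ℂ = ⟪sf.J (x ξ), sf.J η⟫_ℂ := by rw [sf.J_fix η hη]
      _ = starRingEnd ℂ w := by rw [inner_J_J, inner_conj_symm]
  -- `1 + t x ∈ A`, so pairing `(1 + t x) J (1 + t x) ξ ∈ P` with `η` gives a nonnegative
  -- quadratic in `t` whose linear coefficient is `2 re w`.
  have hquad (t : ℝ) : 0 ≤ c.re * (t * t) + 2 * w.re * t + 0 := by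
    have hxt : 1 + (t : ℂ) • x ∈ A := A.add_mem A.one_mem (A.smul_mem hx _)
    have hJ : sf.J ((1 + (t : ℂ) • x) ξ) = ξ + (t : ℂ) • sf.J (x ξ) := by
      rw [add_apply, one_apply_eq_self, smul_apply, map_add, sf.J.map_smulₛₗ, sf.J_fix ξ hξ,
        Complex.conj_ofReal]
    have hexp : ⟪(1 + (t : ℂ) • x) (sf.J ((1 + (t : ℂ) • x) ξ)), η⟫_ℂ
        = t * starRingEnd ℂ w + t * w + (t * t) * c := by
      rw [hJ]
      simp only [add_apply, one_apply_eq_self, smul_apply, map_add, map_smul, inner_add_left,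
        inner_smul_left, Complex.conj_ofReal, h0, hJw]
      ring
    have hre := (sf.inner_nonneg (sf.apply_J_apply_mem hxt hξ) hη).1
    rw [hexp] at hre
    simp only [Complex.zero_re, Complex.add_re, Complex.mul_re, Complex.ofReal_re, Complex.conj_re,
      Complex.ofReal_im, Complex.conj_im, mul_neg, zero_mul, neg_zero, sub_zero, mul_zero,
      Complex.mul_im, add_zero] at hre
    linarith
  have hdisc := discrim_le_zero hquad
  rw [discrim] at hdisc
  nlinarith [sq_nonneg w.re]

theorem inner_apply_eq_zero {ξ η : H} (hξ : ξ ∈ sf.P) (hη : η ∈ sf.P) (h0 : ⟪ξ, η⟫_ℂ = 0)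
    {x : H →L[ℂ] H} (hx : x ∈ A) : ⟪x ξ, η⟫_ℂ = 0 := by
  have him := sf.re_inner_apply_eq_zero hξ hη h0 (A.smul_mem hx Complex.I)
  rw [smul_apply, inner_smul_left, Complex.conj_I] at him
  simp only [neg_mul, Complex.neg_re, Complex.mul_re, Complex.I_re, Complex.I_im] at him
  exact Complex.ext (sf.re_inner_apply_eq_zero hξ hη h0 hx) (by simpa using him)

theorem inner_commutant_apply_eq_zero {ξ η : H} (hξ : ξ ∈ sf.P) (hη : η ∈ sf.P)
    (h0 : ⟪ξ, η⟫_ℂ = 0) {y : H →L[ℂ] H} (hy : y ∈ A.commutant) : ⟪y ξ, η⟫_ℂ = 0 := by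
  obtain ⟨x, hx, hxy⟩ := sf.commutant_JMJ y hy
  calc ⟪y ξ, η⟫_ℂ = ⟪sf.J (x ξ), sf.J η⟫_ℂ := by rw [← hxy, sf.J_fix ξ hξ, sf.J_fix η hη]
    _ = 0 := by rw [inner_J_J, ← inner_conj_symm, sf.inner_apply_eq_zero hξ hη h0 hx, map_zero]

theorem exists_orthogonal_decomposition {ζ : H} (hζ : sf.J ζ = ζ) :
    ∃ v ∈ sf.P, ∃ m ∈ sf.P, ζ = v - m ∧ ⟪v, m⟫_ℂ = 0 := by
  let _ : InnerProductSpace ℝ H := .complexToReal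
  obtain ⟨v, hv, hperp, hpolar⟩ := sf.convex.exists_moreau_decomposition sf.isClosed.isComplete
    (fun _ hw _ hr => sf.smul_mem hw hr) ⟨0, sf.zero_mem⟩ ζ
  have hre (x y : H) : ⟪x, y⟫_ℝ = (⟪x, y⟫_ℂ).re := rfl
  simp only [hre, ← neg_sub v ζ, inner_neg_left, Complex.neg_re, neg_nonpos, neg_eq_zero]
    at hperp hpolar
  have hJm : sf.J (v - ζ) = v - ζ := by rw [map_sub, hζ, sf.J_fix v hv]
  refine ⟨v, hv, v - ζ, sf.mem_of_re_inner_nonneg hJm hpolar, by abel, ?_⟩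
  refine Complex.ext ?_ (sf.im_inner_eq_zero_of_J_eq (sf.J_fix v hv) hJm)
  rw [← inner_conj_symm, Complex.conj_re, hperp, Complex.zero_re]

theorem sub_mem_of_inner_apply_eq {ξ η : H} (hξ : ξ ∈ sf.P) (hη : η ∈ sf.P)
    (h : ∀ a ∈ A, ⟪ξ, a ξ⟫_ℂ = ⟪η, a η⟫_ℂ) : η - ξ ∈ sf.P := by
  have hJ : sf.J (ξ - η) = ξ - η := by rw [map_sub, sf.J_fix ξ hξ, sf.J_fix η hη]
  obtain ⟨v, hv, m, hm, hvm, hvm0⟩ := sf.exists_orthogonal_decomposition hJ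
  obtain ⟨p, hpA, hp, hpv, hpm⟩ := VonNeumannAlgebra.exists_isStarProjection_mem_apply_eq
    fun y hy => sf.inner_commutant_apply_eq_zero hv hm hvm0 hy
  have hpζ : p (ξ - η) = v := by rw [hvm, map_sub, hpv, hpm, sub_zero]
  have hsa : ∀ x y, ⟪p x, y⟫_ℂ = ⟪x, p y⟫_ℂ := hp.isSelfAdjoint.isSymmetric
  have hmv : ⟪m, v⟫_ℂ = 0 := by rw [← inner_conj_symm, hvm0, map_zero]
  have hexp : ⟪ξ, p ξ⟫_ℂ = ⟪η, p η⟫_ℂ + (⟪η, v⟫_ℂ + ⟪v, η⟫_ℂ + ⟪v, v⟫_ℂ) := by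
    have hξη : ξ = η + (ξ - η) := by abel
    conv_lhs => rw [hξη]
    rw [map_add, inner_add_left, inner_add_right, inner_add_right, hpζ, ← hsa (ξ - η), hpζ,
      hvm, inner_sub_left, hmv]
    ring
  have hsum : ⟪η, v⟫_ℂ + ⟪v, η⟫_ℂ + ⟪v, v⟫_ℂ = 0 := by
    linear_combination hexp.symm.trans (h p hpA)
  have hv0 : v = 0 := by
    rw [add_eq_zero_iff_of_nonneg (add_nonneg (sf.inner_nonneg hη hv) (sf.inner_nonneg hv hη))
      (sf.inner_nonneg hv hv)] at hsum
    exact inner_self_eq_zero.1 hsum.2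
  rw [hv0, zero_sub] at hvm
  rwa [← neg_sub, hvm, neg_neg]

theorem eq_of_inner_apply_eq {ξ η : H} (hξ : ξ ∈ sf.P) (hη : η ∈ sf.P)
    (h : ∀ a ∈ A, ⟪ξ, a ξ⟫_ℂ = ⟪η, a η⟫_ℂ) : ξ = η := by
  have hsub := sf.sub_mem_of_inner_apply_eq hξ hη h
  have hsub' := sf.sub_mem_of_inner_apply_eq hη hξ fun a ha => (h a ha).symm
  rw [← neg_sub] at hsub'
  exact (sub_eq_zero.1 (sf.eq_zero_of_mem_of_neg_mem hsub hsub')).symm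

theorem exists_mem_norm_eq_one_forall_apply_eq {ι : Type*} (U : ι → H →L[ℂ] H)
    (hU : ∀ i, U i ∈ unitary (H →L[ℂ] H)) (hUP : ∀ i, Set.MapsTo (U i) sf.P sf.P) {ξ : H}
    (hξ : ξ ≠ 0) (hUξ : ∀ i, U i ξ = ξ) : ∃ η ∈ sf.P, ‖η‖ = 1 ∧ ∀ i, U i η = η := by
  obtain ⟨w, hw, hξw⟩ := sf.exists_inner_ne_zero hξ
  let _ : InnerProductSpace ℝ H := .complexToReal
  have hpos : 0 < ⟪⟪ξ, w⟫_ℂ • ξ, w⟫_ℝ := by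
    rw [real_inner_eq_re_inner, inner_smul_left, ← Complex.normSq_eq_conj_mul_self]
    exact Complex.normSq_pos.2 hξw
  obtain ⟨v, hv, hv0, hUv⟩ := sf.convex.exists_mem_ne_zero_forall_apply_eq sf.isClosed.isComplete
    hw hpos (fun i => U i)
    (fun i => AddMonoidHomClass.isometry_of_norm _ (norm_map_of_mem_unitary (hU i))) hUP
    (fun i => by rw [map_smul, hUξ])
  refine ⟨‖v‖⁻¹ • v, sf.smul_mem hv (by positivity), norm_smul_inv_norm hv0, fun i => ?_⟩
  rw [map_smul_of_tower, hUv]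

end StandardForm

theorem exists_invariant_vector_iff_normal_invariant_state_general
    {G : Type*} [Group G]
    {H : Type*} [NormedAddCommGroup H] [InnerProductSpace ℂ H] [CompleteSpace H]
    (A : VonNeumannAlgebra H) (sf : StandardForm A)
    -- π_A^α : the canonical implementation of the action α on L²(A)
    (πA : G →* (H →L[ℂ] H))
    (hπAu : ∀ s, ContinuousLinearMap.adjoint (πA s) = πA s⁻¹)
    (hπAP : ∀ s : G, ∀ ξ ∈ sf.P, πA s ξ ∈ sf.P) :
    (∃ ξ : H, ξ ≠ 0 ∧ ∀ s : G, πA s ξ = ξ) ↔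
      (∃ ξ ∈ sf.P, ‖ξ‖ = 1 ∧
        ∀ s : G, ∀ a ∈ A, (inner ℂ ξ ((πA s * a * πA s⁻¹) ξ) : ℂ) = inner ℂ ξ (a ξ)) := by
  have hU (s : G) : πA s ∈ unitary (H →L[ℂ] H) := by
    rw [Unitary.mem_iff, ContinuousLinearMap.star_eq_adjoint, hπAu, ← map_mul, ← map_mul,
      inv_mul_cancel, mul_inv_cancel, map_one, and_self]
  have hconj (s : G) (a : H →L[ℂ] H) (ξ : H) :
      inner ℂ ξ ((πA s * a * πA s⁻¹) ξ) = inner ℂ (πA s⁻¹ ξ) (a (πA s⁻¹ ξ)) := by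
    rw [show (πA s * a * πA s⁻¹) ξ = πA s (a (πA s⁻¹ ξ)) from rfl,
      ← ContinuousLinearMap.adjoint_inner_left, hπAu]
  constructor
  · rintro ⟨ξ, hξ, hinv⟩
    obtain ⟨η, hηP, hη, hηinv⟩ :=
      sf.exists_mem_norm_eq_one_forall_apply_eq (fun s => πA s) hU hπAP hξ hinv
    exact ⟨η, hηP, hη, fun s a _ => by rw [hconj, hηinv]⟩
  · rintro ⟨ξ, hξP, hξ, hinv⟩
    have hfix (s : G) : πA s⁻¹ ξ = ξ :=
      sf.eq_of_inner_apply_eq (hπAP s⁻¹ ξ hξP) hξP fun a ha => by rw [← hconj, hinv s a ha]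
    exact ⟨ξ, norm_ne_zero_iff.1 (by simp [hξ]), fun s => by simpa using hfix s⁻¹⟩

/-- For a von Neumann dynamical system `(A, G, α)`, the canonical
representation `π_A^α` has a nonzero `G`-invariant vector if and only if there is a normal
`G`-invariant state on `A`.  (Normal states on `A` are exactly the vector states `ω_ξ` for
unit vectors `ξ` in the positive cone `P` of the standard form.) -/
theorem exists_invariant_vector_iff_normal_invariant_state
    {G : Type*} [Group G] [TopologicalSpace G] [IsTopologicalGroup G] [LocallyCompactSpace G]
    {H : Type*} [NormedAddCommGroup H] [InnerProductSpace ℂ H] [CompleteSpace H]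
    (A : VonNeumannAlgebra H) (sf : StandardForm A)
    -- π_A^α : the canonical implementation of the action α on L²(A)
    (πA : G →* (H →L[ℂ] H))
    (hπAu : ∀ s, ContinuousLinearMap.adjoint (πA s) = πA s⁻¹)
    (hπAc : ∀ ξ : H, Continuous fun s => πA s ξ)
    (hπAP : ∀ s : G, ∀ ξ ∈ sf.P, πA s ξ ∈ sf.P)
    (hπAJ : ∀ (s : G) (ξ : H), πA s (sf.J ξ) = sf.J (πA s ξ))
    (hπA_A : ∀ s : G, ∀ a ∈ A, πA s * a * πA s⁻¹ ∈ A) :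
    (∃ ξ : H, ξ ≠ 0 ∧ ∀ s : G, πA s ξ = ξ) ↔
      (∃ ξ ∈ sf.P, ‖ξ‖ = 1 ∧
        ∀ s : G, ∀ a ∈ A, (inner ℂ ξ ((πA s * a * πA s⁻¹) ξ) : ℂ) = inner ℂ ξ (a ξ)) :=
  exists_invariant_vector_iff_normal_invariant_state_general A sf πA hπAu hπAP
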